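/- Let F be a family of proper arcs. If an arc u is anticlockwise adjacent to an arc v, then every arc w of F whose right endpoint is encountered after the right endpoint of u and before the right endpoint of v when traversing clockwise from r(u) is also anticlockwise adjacent to v. -/

import Mathlib

open SimpleGraph
open scoped Classical

instance : Fact ((0:ℝ) < 1) := ⟨one_pos⟩

/-- An arc on the unit circle `AddCircle 1`, described by its left endpoint (the first
endpoint met anticlockwise from an interior point) and its (clockwise) length.
Since `0 < len < 1`, an arc is neither a single point nor the whole circle. -/
structure CArc where
  left : AddCircle (1:ℝ)
  len : ℝ
  len_pos : 0 < len
  len_lt_one : len < 1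

namespace CArc

/-- The set of points of the arc: going clockwise from the left endpoint for `len`. -/
def pts (a : CArc) : Set (AddCircle (1:ℝ)) :=
  {q | ∃ t : ℝ, 0 ≤ t ∧ t ≤ a.len ∧ q = a.left + (t : AddCircle (1:ℝ))}

/-- The right endpoint of an arc. -/
noncomputable def right (a : CArc) : AddCircle (1:ℝ) := a.left + ((a.len : ℝ) : AddCircle (1:ℝ))

end CArc

/-- A family of arcs on the circle: a finite set of arcs with all endpoints distinct. -/
structure ArcFamily where
  arcs : Finset CArc
  endpoints_distinct :
    ∀ a ∈ arcs, ∀ b ∈ arcs, a ≠ b →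
      a.left ≠ b.left ∧ a.left ≠ b.right ∧ a.right ≠ b.left ∧ a.right ≠ b.right

namespace ArcFamily

/-- A family of arcs is proper if no arc is properly contained in another. -/
def IsProper (F : ArcFamily) : Prop :=
  ∀ a ∈ F.arcs, ∀ b ∈ F.arcs, ¬ a.pts ⊂ b.pts

/-- The overlap set of a point `p`: all arcs of the family containing `p`. -/
noncomputable def overlap (F : ArcFamily) (p : AddCircle (1:ℝ)) : Finset CArc :=
  F.arcs.filter fun a => p ∈ a.pts

/-- `r_sup`: the maximum cardinality of an overlap set. -/
noncomputable def rsup (F : ArcFamily) : ℕ :=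
  sSup {n | ∃ p, (F.overlap p).card = n}

/-- `r_inf`: the minimum cardinality of an overlap set. -/
noncomputable def rinf (F : ArcFamily) : ℕ :=
  sInf {n | ∃ p, (F.overlap p).card = n}

/-- The circular arc graph of a family: vertices are the arcs, two distinct arcs are
adjacent iff they intersect. -/
def graph (F : ArcFamily) : SimpleGraph {a : CArc // a ∈ F.arcs} where
  Adj u v := u ≠ v ∧ (u.1.pts ∩ v.1.pts).Nonempty
  symm := ⟨by rintro u v ⟨h, q, h1, h2⟩; exact ⟨h.symm, q, h2, h1⟩⟩
  loopless := ⟨by rintro u ⟨h, -⟩; exact h rfl⟩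

/-- `F.CwAdj u v` : the arc `v` is clockwise adjacent to the arc `u`,
i.e. `v ≠ u` and `v ∈ O(r(u))`. -/
def CwAdj (F : ArcFamily) (u v : CArc) : Prop :=
  v ≠ u ∧ v ∈ F.overlap u.right

/-- `F.AcwAdj u v` : the arc `v` is anticlockwise adjacent to the arc `u`,
i.e. `v ≠ u` and `v ∈ O(l(u))`. -/
def AcwAdj (F : ArcFamily) (u v : CArc) : Prop :=
  v ≠ u ∧ v ∈ F.overlap u.left

end ArcFamily

/-- `G` has a complete minor on `m` vertices: there are `m` pairwise disjoint connected
branch sets with an edge of `G` between any two of them. -/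
def HasKMinor {V : Type*} (G : SimpleGraph V) (m : ℕ) : Prop :=
  ∃ B : Fin m → Set V,
    (∀ i, (G.induce (B i)).Connected) ∧
    (Pairwise fun i j => Disjoint (B i) (B j)) ∧
    (Pairwise fun i j => ∃ u ∈ B i, ∃ v ∈ B j, G.Adj u v)

/-- A graph is a proper circular arc graph if it is isomorphic to the circular arc graph
of some proper family of arcs. -/
def IsProperCircularArcGraph {V : Type*} (G : SimpleGraph V) : Prop :=
  ∃ F : ArcFamily, F.IsProper ∧ Nonempty (G ≃g F.graph)

/-- The clockwise angular distance from `p` to `q`: the unique `t ∈ [0,1)`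
with `q = p + t`.  Points are "encountered" in clockwise order of this quantity
when traversing clockwise from `p`. -/
noncomputable def angFrom (p q : AddCircle (1:ℝ)) : ℝ :=
  ((AddCircle.equivIco (1:ℝ) 0) (q - p) : ℝ)

/-!
Measure positions clockwise from `v.left`. Since `u` contains `v.left` and, in a proper family,
an arc starting strictly inside another must end outside it, `u.right` lies inside `v` at some
offset `d < v.len`, and `w.right` lies further on, at offset `d + c < v.len`. Were `w` shorter
than `d + c`, it would start strictly after `v.left` and end inside `v`, so it would be properly
contained in `v`; hence `w` reaches back over `v.left`.
-/

section AngFrom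

variable (p q : AddCircle (1:ℝ))

lemma angFrom_mem_Ico : angFrom p q ∈ Set.Ico (0:ℝ) 1 := by
  have h := (AddCircle.equivIco (1:ℝ) 0 (q - p)).2
  exact ⟨h.1, h.2.trans_eq (zero_add 1)⟩

lemma add_angFrom : p + ((angFrom p q : ℝ) : AddCircle (1:ℝ)) = q := by
  rw [angFrom, AddCircle.coe_equivIco]; abel

lemma angFrom_add_coe {x : ℝ} (hx : x ∈ Set.Ico (0:ℝ) 1) :
    angFrom p (p + (x : AddCircle (1:ℝ))) = x := by
  rw [angFrom, add_sub_cancel_left, AddCircle.equivIco_coe_of_mem (by simpa using hx)]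

variable {p q}

lemma angFrom_pos (h : p ≠ q) : 0 < angFrom p q := by
  refine (angFrom_mem_Ico p q).1.lt_of_ne fun h0 => h ?_
  rw [← add_angFrom p q, ← h0, AddCircle.coe_zero, add_zero]

end AngFrom

namespace CArc

variable {a b : CArc} {p q : AddCircle (1:ℝ)} {x : ℝ}

lemma mem_pts_iff : q ∈ a.pts ↔ angFrom a.left q ≤ a.len := by
  constructor
  · rintro ⟨t, ht0, hta, rfl⟩
    rwa [angFrom_add_coe _ ⟨ht0, hta.trans_lt a.len_lt_one⟩]
  · exact fun h => ⟨angFrom a.left q, (angFrom_mem_Ico _ _).1, h, (add_angFrom _ _).symm⟩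

lemma left_eq_of_right_eq (h : a.right = p + x) :
    a.left = p + ((x - a.len : ℝ) : AddCircle (1:ℝ)) := by
  rw [AddCircle.coe_sub, ← add_sub_assoc, ← h, right, add_sub_cancel_right]

lemma mem_pts_of_right_eq (hx0 : 0 ≤ x) (hx : x ≤ a.len) (h : a.right = q + x) : q ∈ a.pts :=
  ⟨a.len - x, by linarith, by linarith, by
    rw [left_eq_of_right_eq h, add_assoc, ← AddCircle.coe_add, sub_add_sub_cancel', sub_self,
      AddCircle.coe_zero, add_zero]⟩

lemma pts_ssubset_of_left_eq {s : ℝ} (hs : 0 < s) (hle : s + b.len ≤ a.len)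
    (h : b.left = a.left + s) : b.pts ⊂ a.pts := by
  refine ⟨?_, fun hsub => ?_⟩
  · rintro q ⟨t, ht0, htb, rfl⟩
    exact ⟨s + t, by linarith, by linarith, by rw [h, AddCircle.coe_add, add_assoc]⟩
  · -- `b` misses `a.left`: going clockwise from `b.left` back to `a.left` takes `1 - s > b.len`.
    have hleft : a.left = b.left + ((1 - s : ℝ) : AddCircle (1:ℝ)) := by
      rw [h, add_assoc, ← AddCircle.coe_add, add_sub_cancel, AddCircle.coe_period, add_zero]
    have hmem := mem_pts_iff.1
      (hsub (show a.left ∈ a.pts from ⟨0, le_rfl, a.len_pos.le, by simp⟩))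
    rw [hleft, angFrom_add_coe _ ⟨by linarith [a.len_lt_one, b.len_pos], by linarith⟩] at hmem
    linarith [a.len_lt_one]

end CArc

lemma ArcFamily.IsProper.len_lt_of_left_eq {F : ArcFamily} (hF : F.IsProper) {a b : CArc}
    (ha : a ∈ F.arcs) (hb : b ∈ F.arcs) {s : ℝ} (hs : 0 < s) (h : b.left = a.left + s) :
    a.len < s + b.len :=
  lt_of_not_ge fun hle => hF b hb a ha (CArc.pts_ssubset_of_left_eq hs hle h)

theorem acw_adjacent_between_general (F : ArcFamily) (hF : F.IsProper)
    (u v w : CArc) (hu : u ∈ F.arcs) (hv : v ∈ F.arcs) (hw : w ∈ F.arcs)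
    (huv : F.AcwAdj v u)
    (h2 : angFrom u.right w.right < angFrom u.right v.right) :
    F.AcwAdj v w := by
  obtain ⟨hvu, hu_mem⟩ := huv
  set s := angFrom u.left v.left
  set c := angFrom u.right w.right
  have hs_le : s ≤ u.len := CArc.mem_pts_iff.1 (Finset.mem_filter.1 hu_mem).2
  have hs_pos : 0 < s := angFrom_pos (F.endpoints_distinct u hu v hv hvu).1
  have hvl : v.left = u.left + s := (add_angFrom _ _).symm
  have hd := hF.len_lt_of_left_eq hu hv hs_pos hvl
  have hur : u.right = v.left + ((u.len - s : ℝ) : AddCircle (1:ℝ)) := by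
    rw [CArc.right, hvl, add_assoc, ← AddCircle.coe_add, add_sub_cancel]
  have hvr : angFrom u.right v.right = v.len - (u.len - s) := by
    have hv_right : v.right = u.right + ((v.len - (u.len - s) : ℝ) : AddCircle (1:ℝ)) := by
      rw [hur, CArc.right, add_assoc, ← AddCircle.coe_add, add_sub_cancel]
    rw [hv_right, angFrom_add_coe _ ⟨by linarith, by linarith [v.len_lt_one]⟩]
  have hwr : w.right = v.left + ((u.len - s + c : ℝ) : AddCircle (1:ℝ)) := by
    rw [AddCircle.coe_add, ← add_assoc, ← hur, add_angFrom]
  have hc0 : 0 ≤ c := (angFrom_mem_Ico _ _).1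
  have hwv : w ≠ v := by rintro rfl; exact h2.false
  have hw_len : u.len - s + c ≤ w.len := by
    by_contra! hlt
    have := hF.len_lt_of_left_eq hv hw (by linarith) (CArc.left_eq_of_right_eq hwr)
    linarith
  exact ⟨hwv, Finset.mem_filter.2 ⟨hw, CArc.mem_pts_of_right_eq (by linarith) hw_len hwr⟩⟩

/-- In a family of proper arcs, if an arc `u` is anticlockwise adjacent to
an arc `v`, then every arc `w` of `F` whose right endpoint is encountered after `r(u)`
and before `r(v)` when traversing clockwise from `r(u)` is also anticlockwise adjacent
to `v`. -/
theorem acw_adjacent_between (F : ArcFamily) (hF : F.IsProper)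
    (u v w : CArc) (hu : u ∈ F.arcs) (hv : v ∈ F.arcs) (hw : w ∈ F.arcs)
    (huv : F.AcwAdj v u)
    (h1 : 0 < angFrom u.right w.right)
    (h2 : angFrom u.right w.right < angFrom u.right v.right) :
    F.AcwAdj v w :=
  acw_adjacent_between_general F hF u v w hu hv hw huv h2
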